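/- arXiv:1909.05457 — 6 statements merged into one kernel-verified Lean document; each statement's English description precedes it below -/
import Mathlib

section
/- Let X be a topological space, and let ⪰_A and ⪰_B be two complete, continuous, locally strict binary relations on X (a relation ⪰ is locally strict if whenever x ⪰ y, every neighborhood of (x,y) in X×X contains a pair (x',y') with x' strictly preferred to y' under ⪰). Let D be a dense subset of X, and let ⪰ be a complete binary relation on X such that for all x, y ∈ D: if x ⪰ y then x ⪰_A y and x ⪰_B y. Then ⪰_A = ⪰_B. -/
open Filter Topology MeasureTheory

/-- A binary relation on `X`, viewed as a set of pairs, is complete. -/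
def CompleteRel {X : Type*} (R : Set (X × X)) : Prop :=
  ∀ x y : X, (x, y) ∈ R ∨ (y, x) ∈ R

/-- The strict part of a relation. -/
def StrictPref {X : Type*} (R : Set (X × X)) (x y : X) : Prop :=
  (x, y) ∈ R ∧ (y, x) ∉ R

/-- A relation is locally strict. -/
def LocallyStrict {X : Type*} [TopologicalSpace X] (R : Set (X × X)) : Prop :=
  ∀ x y : X, (x, y) ∈ R → ∀ V ∈ 𝓝 ((x, y) : X × X), ∃ p ∈ V, StrictPref R p.1 p.2

/-- Convergence of a sequence of relations in the closed convergence topology. -/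
def ClosedConv {X : Type*} [TopologicalSpace X] (R : ℕ → Set (X × X)) (S : Set (X × X)) : Prop :=
  (∀ p ∈ S, ∃ u : ℕ → X × X, Tendsto u atTop (𝓝 p) ∧ ∀ n, u n ∈ R n) ∧
  (∀ φ : ℕ → ℕ, StrictMono φ → ∀ u : ℕ → X × X, (∀ k, u k ∈ R (φ k)) →
    ∀ p : X × X, Tendsto u atTop (𝓝 p) → p ∈ S)

/-- Grodal transitivity: `x ⪰ y ≻ z ⪰ w` implies `x ⪰ w`. -/
def GrodalTrans {X : Type*} (R : Set (X × X)) : Prop :=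
  ∀ x y z w : X, (x, y) ∈ R → StrictPref R y z → (z, w) ∈ R → (x, w) ∈ R

/-- Strict monotonicity with respect to a dominance relation `D`. -/
def StrictMonoWrt {X : Type*} (R : Set (X × X)) (D : Set (X × X)) : Prop :=
  ∀ x y : X, (x, y) ∈ D → StrictPref R x y

lemma key_sub {X : Type*} [TopologicalSpace X]
    (A B R : Set (X × X))
    (hAcl : IsClosed A) (hAls : LocallyStrict A)
    (hBcl : IsClosed B)
    (D : Set X) (hD : Dense D)
    (hRcomp : CompleteRel R)
    (h : ∀ x ∈ D, ∀ y ∈ D, (x, y) ∈ R → (x, y) ∈ A ∧ (x, y) ∈ B) :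
    A ⊆ B := by
  intro ⟨x, y⟩ hxy
  rw [← hBcl.closure_eq]
  rw [mem_closure_iff_nhds]
  intro V hV
  obtain ⟨⟨x', y'⟩, hpV, hps⟩ := hAls x y hxy (interior V) (interior_mem_nhds.mpr hV)
  set U : Set (X × X) := interior V ∩ Prod.swap ⁻¹' Aᶜ with hU
  have hopen : IsOpen U := isOpen_interior.inter (hAcl.isOpen_compl.preimage continuous_swap)
  have hmem : ((x', y') : X × X) ∈ U := ⟨hpV, hps.2⟩
  obtain ⟨⟨d, e⟩, ⟨hdD, heD⟩, hdeU⟩ := (hD.prod hD).exists_mem_open hopen ⟨_, hmem⟩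
  have hdeR : (d, e) ∈ R := by
    rcases hRcomp d e with h1 | h2
    · exact h1
    · exact absurd (h e heD d hdD h2).1 hdeU.2
  exact ⟨(d, e), interior_subset hdeU.1, (h d hdD e heD hdeR).2⟩

theorem stmt0 {X : Type*} [TopologicalSpace X]
    (A B R : Set (X × X))
    (hAcomp : CompleteRel A) (hAcl : IsClosed A) (hAls : LocallyStrict A)
    (hBcomp : CompleteRel B) (hBcl : IsClosed B) (hBls : LocallyStrict B)
    (D : Set X) (hD : Dense D)
    (hRcomp : CompleteRel R)
    (h : ∀ x ∈ D, ∀ y ∈ D, (x, y) ∈ R → (x, y) ∈ A ∧ (x, y) ∈ B) :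
    A = B :=
  Set.Subset.antisymm
    (key_sub A B R hAcl hAls hBcl D hD hRcomp h)
    (key_sub B A R hBcl hBls hAcl D hD hRcomp
      (fun x hx y hy hxy => ⟨(h x hx y hy hxy).2, (h x hx y hy hxy).1⟩))
end

section
/- Let X be a locally compact, separable, completely metrizable space, let P be a closed set (in the closed convergence topology) of complete, continuous, locally strict binary relations on X, and let {Σ_n} be a nested exhaustive sequence of finite experiments (Σ_n ⊂ Σ_{n+1}, each Σ_n a set of n unordered pairs of alternatives, the union of all alternatives used is dense in X, and every pair of distinct such alternatives appears as a choice problem in some Σ_n). Let c be a choice function selecting one element from each unordered pair. If for every n there is a preference ⪰_n ∈ P rationalizing the observed choices on Σ_n (i.e., for every {x,y} ∈ Σ_n, c({x,y}) ⪰_n x and c({x,y}) ⪰_n y), then there exists a unique ⪰* ∈ P such that ⪰_n → ⪰* in the closed convergence topology, and any other sequence of rationalizations in P also converges to ⪰*. -/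
open Filter Topology MeasureTheory

/-- The relation `R` rationalizes the observed choices on the experiment consisting of
the first `n` binary choice problems `B 0, …, B (n-1)`. -/
def RationalizesOn {X : Type*} (R : Set (X × X)) (c : Sym2 X → X) (B : ℕ → Sym2 X)
    (n : ℕ) : Prop :=
  ∀ k < n, ∀ x ∈ B k, (c (B k), x) ∈ R

/-- The nested sequence of experiments determined by `B` is exhaustive. -/
def Exhaustive {X : Type*} [TopologicalSpace X] (B : ℕ → Sym2 X) : Prop :=
  Dense {x : X | ∃ k, x ∈ B k} ∧
  ∀ x y : X, x ≠ y → (∃ k, x ∈ B k) → (∃ k, y ∈ B k) → ∃ k, B k = Sym2.mk x y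

/-! The limit is the closure of the revealed preference `W = {(x, y) | {x, y} is offered and
`x` is chosen}`. A pair of `W` is ranked by every rationalization from some stage on, so every
closed-convergence limit `S` of a subsequence contains `W`, and `S ∈ P` since `P` is closed.
Local strictness puts `S` inside the closure of its strict part, and a strict pair `(a, b)` of `S`
is approximated by observed alternatives `(d, e)` with `(e, d) ∉ S`; the choice from `{d, e}` must
then have been `d`, so `(d, e) ∈ W`. Hence every subsequential limit equals `closure W`, and since
every sequence of sets in a second countable metrizable space has a subsequence converging in the
closed convergence sense, the whole sequence converges to `closure W`. -/

open Set Metric TopologicalSpace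

theorem CompleteRel.nonempty {X : Type*} {R : Set (X × X)} (h : CompleteRel R) (x : X) :
    R.Nonempty :=
  (h x x).elim (⟨_, ·⟩) (⟨_, ·⟩)

namespace ClosedConv

variable {X : Type*} [TopologicalSpace X] {R : ℕ → Set (X × X)} {S S' : Set (X × X)}

theorem unique (h : ClosedConv R S) (h' : ClosedConv R S') : S = S' := by
  refine subset_antisymm (fun p hp => ?_) (fun p hp => ?_)
  · obtain ⟨u, hu, huR⟩ := h.1 p hp
    exact h'.2 id strictMono_id u huR p hu
  · obtain ⟨u, hu, huR⟩ := h'.1 p hp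
    exact h.2 id strictMono_id u huR p hu

theorem mem_of_eventually_mem (h : ClosedConv R S) {p : X × X}
    (hp : ∀ᶠ n in atTop, p ∈ R n) : p ∈ S := by
  obtain ⟨N, hN⟩ := eventually_atTop.1 hp
  exact h.2 (· + N) (strictMono_id.add_const N) (fun _ => p)
    (fun k => hN _ (Nat.le_add_left N k)) p tendsto_const_nhds

end ClosedConv

theorem exists_tendsto_forall_mem {Y : Type*} [TopologicalSpace Y] [PseudoMetrizableSpace Y]
    {C : ℕ → Set Y} {p : Y} (hC : ∀ n, (C n).Nonempty)
    (h : ∀ V ∈ 𝓝 p, ∀ᶠ n in atTop, (C n ∩ V).Nonempty) :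
    ∃ u : ℕ → Y, Tendsto u atTop (𝓝 p) ∧ ∀ n, u n ∈ C n := by
  let := pseudoMetrizableSpacePseudoMetric Y
  have hdist : Tendsto (fun n => infDist p (C n)) atTop (𝓝 0) :=
    tendsto_order.2 ⟨fun a ha => Eventually.of_forall fun _ => ha.trans_le infDist_nonneg,
      fun ε hε => (h _ (ball_mem_nhds p hε)).mono fun _ ⟨y, hyC, hy⟩ =>
        (infDist_le_dist_of_mem hyC).trans_lt (mem_ball'.1 hy)⟩
  have hnear : ∀ n : ℕ, ∃ y ∈ C n, dist p y < infDist p (C n) + 1 / (n + 1) := fun n =>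
    (infDist_lt_iff (hC n)).1 (lt_add_of_pos_right _ Nat.one_div_pos_of_nat)
  choose u huC hu using hnear
  refine ⟨u, tendsto_iff_dist_tendsto_zero.2 (squeeze_zero (fun _ => dist_nonneg)
    (fun n => (dist_comm (u n) p).trans_le (hu n).le) ?_), huC⟩
  simpa using hdist.add tendsto_one_div_add_atTop_nhds_zero_nat

/-- Compactness of the closed convergence topology, in sequential form. -/
theorem exists_strictMono_closedConv {X : Type*} [TopologicalSpace X] [PseudoMetrizableSpace X]
    [SecondCountableTopology X] (C : ℕ → Set (X × X)) (hC : ∀ n, (C n).Nonempty) :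
    ∃ (σ : ℕ → ℕ) (S : Set (X × X)), StrictMono σ ∧ IsClosed S ∧
      ClosedConv (fun n => C (σ n)) S := by
  classical
  obtain ⟨b, hb⟩ := exists_seq_basis (X × X)
  have hbopen : ∀ i, IsOpen (b i) := fun i => hb.isOpen (mem_range_self i)
  -- `g i` records whether the selected subsequence eventually meets the basic open set `b i`
  obtain ⟨g, σ, hσ, hg⟩ :=
    CompactSpace.tendsto_subseq fun k (i : ℕ) => decide (C k ∩ b i).Nonempty
  have hstab : ∀ i, ∀ᶠ k in atTop, decide (C (σ k) ∩ b i).Nonempty = g i := fun i =>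
    (tendsto_pi_nhds.1 hg i).eventually (isOpen_discrete {g i} |>.mem_nhds rfl)
  refine ⟨σ, {p | ∀ i, p ∈ b i → g i = true}, hσ, ?_, ?_, ?_⟩
  · refine isOpen_compl_iff.1 (isOpen_iff_mem_nhds.2 fun p hp => ?_)
    obtain ⟨i, hpi, hgi⟩ : ∃ i, p ∈ b i ∧ g i ≠ true := by simpa using hp
    exact mem_of_superset ((hbopen i).mem_nhds hpi) fun q hq hqS => hgi (hqS i hq)
  · refine fun p hp => exists_tendsto_forall_mem (fun k => hC (σ k)) fun V hV => ?_
    obtain ⟨_, ⟨i, rfl⟩, hpi, hiV⟩ := hb.mem_nhds_iff.1 hV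
    filter_upwards [hstab i] with k hk
    exact (of_decide_eq_true (hk.trans (hp i hpi))).mono (inter_subset_inter_right _ hiV)
  · intro φ hφ u hu p hp i hpi
    obtain ⟨k, hku, hkg⟩ := ((hp.eventually ((hbopen i).mem_nhds hpi)).and
      (hφ.tendsto_atTop.eventually (hstab i))).exists
    exact hkg.symm.trans (decide_eq_true ⟨u k, hu k, hku⟩)

section Revealed

variable {X : Type*} {c : Sym2 X → X} {B : ℕ → Sym2 X}

variable (c B) in
def revealedPref : Set (X × X) :=
  {p | ∃ m, B m = s(p.1, p.2) ∧ c (B m) = p.1}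

theorem eventually_mem_of_rationalizesOn {R : ℕ → Set (X × X)}
    (hR : ∀ n, RationalizesOn (R n) c B n) {p : X × X} (hp : p ∈ revealedPref c B) :
    ∀ᶠ n in atTop, p ∈ R n := by
  obtain ⟨m, hm, hcm⟩ := hp
  filter_upwards [eventually_gt_atTop m] with n hn
  simpa only [hcm] using hR n m hn p.2 (hm ▸ Sym2.mem_mk_right _ _)

variable [TopologicalSpace X]

theorem LocallyStrict.subset_closure_strictPref {S : Set (X × X)} (h : LocallyStrict S) :
    S ⊆ closure {p | StrictPref S p.1 p.2} := fun p hp =>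
  mem_closure_iff_nhds.2 fun V hV => h p.1 p.2 hp V hV

theorem strictPref_subset_closure_revealedPref {S : Set (X × X)} (hS : IsClosed S)
    (hSc : CompleteRel S) (hW : revealedPref c B ⊆ S) (hB : Exhaustive B)
    (hc : ∀ z : Sym2 X, c z ∈ z) :
    {p | StrictPref S p.1 p.2} ⊆ closure (revealedPref c B) := by
  rintro ⟨a, b⟩ hab
  refine mem_closure_iff.2 fun O hO habO => ?_
  have hopen : IsOpen {q : X × X | (q.2, q.1) ∉ S} :=
    hS.isOpen_compl.preimage continuous_swap
  obtain ⟨⟨d, e⟩, ⟨hd, he⟩, hdeO, hed⟩ :=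
    (hB.1.prod hB.1).exists_mem_open (hO.inter hopen) ⟨(a, b), habO, hab.2⟩
  have hde : d ≠ e := by
    rintro rfl
    exact hed ((hSc d d).elim id id)
  obtain ⟨m, hm⟩ := hB.2 d e hde hd he
  have hcm : c (B m) = d ∨ c (B m) = e := by
    simpa only [hm, Sym2.mem_iff] using hc (B m)
  -- choosing `e` from `{d, e}` would reveal `(e, d)`, which lies outside `S`
  refine ⟨(d, e), hdeO, m, hm, hcm.resolve_right fun hce => hed (hW ⟨m, ?_, hce⟩)⟩
  exact hm.trans Sym2.eq_swap

theorem eq_closure_revealedPref {S : Set (X × X)} (hSc : CompleteRel S)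
    (hS : IsClosed S) (hSls : LocallyStrict S) (hW : revealedPref c B ⊆ S) (hB : Exhaustive B)
    (hc : ∀ z : Sym2 X, c z ∈ z) : S = closure (revealedPref c B) :=
  subset_antisymm
    (hSls.subset_closure_strictPref.trans <| closure_minimal
      (strictPref_subset_closure_revealedPref hS hSc hW hB hc) isClosed_closure)
    (closure_minimal hW hS)

theorem closedConv_closure_revealedPref [PseudoMetrizableSpace X] [SecondCountableTopology X]
    {P : Set (Set (X × X))}
    (hP : ∀ R ∈ P, CompleteRel R ∧ IsClosed R ∧ LocallyStrict R)
    (hPclosed : ∀ (R : ℕ → Set (X × X)), (∀ n, R n ∈ P) →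
      ∀ S : Set (X × X), IsClosed S → ClosedConv R S → S ∈ P)
    (hB : Exhaustive B) (hc : ∀ z : Sym2 X, c z ∈ z)
    {R : ℕ → Set (X × X)} (hR : ∀ n, R n ∈ P ∧ RationalizesOn (R n) c B n) :
    ClosedConv R (closure (revealedPref c B)) := by
  have hW : ∀ p ∈ revealedPref c B, ∀ᶠ n in atTop, p ∈ R n := fun p hp =>
    eventually_mem_of_rationalizesOn (fun n => (hR n).2) hp
  have hne : ∀ (p : X × X) n, (R n).Nonempty := fun p n => (hP _ (hR n).1).1.nonempty p.1
  have hlim : ∀ ψ : ℕ → ℕ, StrictMono ψ → ∀ S, IsClosed S →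
      ClosedConv (fun k => R (ψ k)) S → S = closure (revealedPref c B) := by
    intro ψ hψ S hS hRS
    obtain ⟨hSc, -, hSls⟩ := hP S (hPclosed _ (fun k => (hR (ψ k)).1) S hS hRS)
    exact eq_closure_revealedPref hSc hS hSls
      (fun p hp => hRS.mem_of_eventually_mem (hψ.tendsto_atTop.eventually (hW p hp))) hB hc
  refine ⟨fun p hp => exists_tendsto_forall_mem (hne p) fun V hV => ?_,
    fun φ hφ u hu p hup => ?_⟩
  · obtain ⟨w, hwV, hwW⟩ := mem_closure_iff_nhds.1 hp V hV
    exact (hW w hwW).mono fun n hn => ⟨w, hn, hwV⟩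
  · obtain ⟨σ, S, hσ, hS, hRS⟩ :=
      exists_strictMono_closedConv (fun k => R (φ k)) fun k => hne p (φ k)
    rw [← hlim (φ ∘ σ) (hφ.comp hσ) S hS hRS]
    exact hRS.2 id strictMono_id (u ∘ σ) (fun k => hu (σ k)) p (hup.comp hσ.tendsto_atTop)

end Revealed

theorem stmt3_general {X : Type*} [TopologicalSpace X] [PolishSpace X]
    (P : Set (Set (X × X)))
    (hP : ∀ R ∈ P, CompleteRel R ∧ IsClosed R ∧ LocallyStrict R)
    (hPclosed : ∀ (R : ℕ → Set (X × X)), (∀ n, R n ∈ P) →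
      ∀ S : Set (X × X), IsClosed S → ClosedConv R S → S ∈ P)
    (B : ℕ → Sym2 X) (hBex : Exhaustive B)
    (c : Sym2 X → X) (hc : ∀ z : Sym2 X, c z ∈ z)
    (R : ℕ → Set (X × X))
    (hR : ∀ n, R n ∈ P ∧ RationalizesOn (R n) c B n) :
    ∃ S ∈ P, ClosedConv R S ∧
      (∀ R' : ℕ → Set (X × X),
        (∀ n, R' n ∈ P ∧ RationalizesOn (R' n) c B n) → ClosedConv R' S) ∧
      (∀ S' ∈ P, ClosedConv R S' → S' = S) := by
  have hconv : ∀ R' : ℕ → Set (X × X),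
      (∀ n, R' n ∈ P ∧ RationalizesOn (R' n) c B n) →
        ClosedConv R' (closure (revealedPref c B)) :=
    fun _ hR' => closedConv_closure_revealedPref hP hPclosed hBex hc hR'
  exact ⟨_, hPclosed R (fun n => (hR n).1) _ isClosed_closure (hconv R hR), hconv R hR, hconv,
    fun _ _ hS' => hS'.unique (hconv R hR)⟩

theorem stmt3 {X : Type*} [TopologicalSpace X] [PolishSpace X] [LocallyCompactSpace X]
    (P : Set (Set (X × X)))
    (hP : ∀ R ∈ P, CompleteRel R ∧ IsClosed R ∧ LocallyStrict R)
    (hPclosed : ∀ (R : ℕ → Set (X × X)), (∀ n, R n ∈ P) →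
      ∀ S : Set (X × X), IsClosed S → ClosedConv R S → S ∈ P)
    (B : ℕ → Sym2 X) (hBinj : Function.Injective B) (hBex : Exhaustive B)
    (c : Sym2 X → X) (hc : ∀ z : Sym2 X, c z ∈ z)
    (R : ℕ → Set (X × X))
    (hR : ∀ n, R n ∈ P ∧ RationalizesOn (R n) c B n) :
    ∃ S ∈ P, ClosedConv R S ∧
      (∀ R' : ℕ → Set (X × X),
        (∀ n, R' n ∈ P ∧ RationalizesOn (R' n) c B n) → ClosedConv R' S) ∧
      (∀ S' ∈ P, ClosedConv R S' → S' = S) :=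
  stmt3_general P hP hPclosed B hBex c hc R hR
end

section
/- Let X be a locally compact, separable, completely metrizable space and ▷ an open irreflexive binary relation on X (a dominance relation). Then the set of complete continuous binary relations on X that are Grodal-transitive (x ⪰ y ≻ z ⪰ w implies x ⪰ w) and strictly monotone with respect to ▷ (x ▷ y implies x ≻ y) is a closed subset of the space of closed binary relations under the closed convergence topology. -/
open Filter Topology MeasureTheory

/-!
Each property passes to the limit `S` through the two halves of closed convergence: a pair of
`S` is a limit of pairs `u n ∈ R n`, and a limit of pairs lying in infinitely many `R n` lies
in `S`. For Grodal transitivity, approximate `x ⪰ y` and `z ⪰ w` by `a n` and `c n`; if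
`(a n).1 ⪰ₙ (c n).2` fails eventually, completeness makes `(c n).2 ≻ₙ (a n).1`, and Grodal
transitivity of `R n` gives `(c n).1 ⪰ₙ (a n).2`, whence `z ⪰ y`, contradicting `y ≻ z`.
-/

theorem CompleteRel.strictPref_of_not_mem {X : Type*} {R : Set (X × X)} (hR : CompleteRel R)
    {x y : X} (hxy : (x, y) ∉ R) : StrictPref R y x :=
  ⟨(hR x y).resolve_left hxy, hxy⟩

namespace ClosedConv

variable {X : Type*} [TopologicalSpace X] {R : ℕ → Set (X × X)} {S : Set (X × X)}

theorem mem_of_frequently (h : ClosedConv R S) {u : ℕ → X × X} {p : X × X}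
    (hu : Tendsto u atTop (𝓝 p)) (hfreq : ∃ᶠ n in atTop, u n ∈ R n) : p ∈ S := by
  obtain ⟨φ, hφ, hφR⟩ := extraction_of_frequently_atTop hfreq
  exact h.2 φ hφ (u ∘ φ) hφR p (hu.comp hφ.tendsto_atTop)

theorem completeRel (h : ClosedConv R S) (hR : ∀ n, CompleteRel (R n)) : CompleteRel S := by
  intro x y
  have hfreq : ∃ᶠ n in atTop, (x, y) ∈ R n ∨ (y, x) ∈ R n :=
    Frequently.of_forall fun n => hR n x y
  rcases frequently_or_distrib.mp hfreq with hxy | hyx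
  · exact Or.inl (h.mem_of_frequently tendsto_const_nhds hxy)
  · exact Or.inr (h.mem_of_frequently tendsto_const_nhds hyx)

theorem grodalTrans (h : ClosedConv R S) (hR : ∀ n, CompleteRel (R n) ∧ GrodalTrans (R n)) :
    GrodalTrans S := by
  intro x y z w hxy hyz hzw
  obtain ⟨a, ha, haR⟩ := h.1 (x, y) hxy
  obtain ⟨c, hc, hcR⟩ := h.1 (z, w) hzw
  by_cases hfreq : ∃ᶠ n in atTop, ((a n).1, (c n).2) ∈ R n
  · exact h.mem_of_frequently (ha.fst_nhds.prodMk_nhds hc.snd_nhds) hfreq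
  · refine absurd ?_ hyz.2
    have hzy : ∀ᶠ n in atTop, ((c n).1, (a n).2) ∈ R n := by
      filter_upwards [not_frequently.mp hfreq] with n hn
      exact (hR n).2 _ _ _ _ (hcR n) ((hR n).1.strictPref_of_not_mem hn) (haR n)
    exact h.mem_of_frequently (hc.fst_nhds.prodMk_nhds ha.snd_nhds) hzy.frequently

theorem strictMonoWrt (h : ClosedConv R S) {D : Set (X × X)} (hD : IsOpen D)
    (hR : ∀ n, StrictMonoWrt (R n) D) : StrictMonoWrt S D := by
  intro x y hxy
  refine ⟨h.mem_of_frequently tendsto_const_nhds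
    (Frequently.of_forall fun n => (hR n x y hxy).1), fun hyx => ?_⟩
  obtain ⟨u, hu, huR⟩ := h.1 (y, x) hyx
  have hswap : ∀ᶠ n in atTop, (u n).swap ∈ D :=
    ((continuous_swap.tendsto (y, x)).comp hu) (hD.mem_nhds hxy)
  obtain ⟨n, hn⟩ := hswap.exists
  exact (hR n _ _ hn).2 (huR n)

end ClosedConv

theorem stmt7_general {X : Type*} [TopologicalSpace X]
    (D : Set (X × X)) (hDopen : IsOpen D)
    (R : ℕ → Set (X × X))
    (hR : ∀ n, CompleteRel (R n) ∧ IsClosed (R n) ∧ GrodalTrans (R n) ∧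
      StrictMonoWrt (R n) D)
    (S : Set (X × X))
    (hconv : ClosedConv R S) :
    CompleteRel S ∧ GrodalTrans S ∧ StrictMonoWrt S D :=
  ⟨hconv.completeRel fun n => (hR n).1,
    hconv.grodalTrans fun n => ⟨(hR n).1, (hR n).2.2.1⟩,
    hconv.strictMonoWrt hDopen fun n => (hR n).2.2.2⟩

theorem stmt7 {X : Type*} [TopologicalSpace X] [PolishSpace X] [LocallyCompactSpace X]
    (D : Set (X × X)) (hDopen : IsOpen D) (hDirr : ∀ x : X, (x, x) ∉ D)
    (R : ℕ → Set (X × X))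
    (hR : ∀ n, CompleteRel (R n) ∧ IsClosed (R n) ∧ GrodalTrans (R n) ∧
      StrictMonoWrt (R n) D)
    (S : Set (X × X)) (hScl : IsClosed S)
    (hconv : ClosedConv R S) :
    CompleteRel S ∧ GrodalTrans S ∧ StrictMonoWrt S D :=
  stmt7_general D hDopen R hR S hconv
end

section
/- Let X be a topological space, ▷ a dominance relation on X, and ⪰ a complete, Grodal-transitive preference that is strictly monotone with respect to ▷. Suppose that for each x ∈ X and each neighborhood U of x there exist y, z ∈ U with y ▷ x and x ▷ z. Then ⪰ is locally strict. -/
open Filter Topology MeasureTheory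

theorem stmt8 {X : Type*} [TopologicalSpace X]
    (D : Set (X × X)) (hDirr : ∀ x : X, (x, x) ∉ D)
    (R : Set (X × X)) (hcomp : CompleteRel R) (hcl : IsClosed R)
    (hG : GrodalTrans R) (hmono : StrictMonoWrt R D)
    (happrox : ∀ x : X, ∀ U ∈ 𝓝 x, ∃ y ∈ U, ∃ z ∈ U, (y, x) ∈ D ∧ (x, z) ∈ D) :
    LocallyStrict R := by
  intro x y hxy V hV
  rw [nhds_prod_eq, Filter.mem_prod_iff] at hV
  obtain ⟨U₁, hU₁, U₂, hU₂, hUV⟩ := hV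
  obtain ⟨y', hy'U, -, -, hy'x, -⟩ := happrox x U₁ hU₁
  obtain ⟨-, -, z, hzU, -, hyz⟩ := happrox y U₂ hU₂
  have hrefl : ∀ a : X, (a, a) ∈ R := fun a => (hcomp a a).elim id id
  have h1 : StrictPref R y' x := hmono _ _ hy'x
  have h2 : StrictPref R y z := hmono _ _ hyz
  have hy'y : (y', y) ∈ R := hG y' y' x y (hrefl y') h1 hxy
  have hy'z : (y', z) ∈ R := hG y' y z z hy'y h2 (hrefl z)
  refine ⟨(y', z), hUV ⟨hy'U, hzU⟩, hy'z, fun h => h2.2 (hG z y' x y h h1 hxy)⟩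
end

section
/- Let ⪰ be a complete Grodal-transitive binary relation on a set X, and for each x let U_x = {y : y ≻ x}. Then the family {U_x : x ∈ X} is totally ordered by inclusion: for all x, y ∈ X, either U_x ⊆ U_y or U_y ⊆ U_x. -/
open Filter Topology MeasureTheory

theorem stmt9 {X : Type*} (R : Set (X × X))
    (hcomp : CompleteRel R) (hG : GrodalTrans R) (x y : X) :
    {z : X | StrictPref R z x} ⊆ {z : X | StrictPref R z y} ∨
      {z : X | StrictPref R z y} ⊆ {z : X | StrictPref R z x} := by
  by_contra h
  rw [not_or, Set.not_subset, Set.not_subset] at h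
  obtain ⟨⟨a, ha, hay⟩, ⟨b, hb, hbx⟩⟩ := h
  simp only [Set.mem_setOf_eq] at ha hay hb hbx
  -- from ¬ StrictPref R a y and completeness, (y, a) ∈ R
  have hya : (y, a) ∈ R := by
    rcases hcomp a y with hay' | h'
    · by_contra hc
      exact hay ⟨hay', hc⟩
    · exact h'
  have hxb : (x, b) ∈ R := by
    rcases hcomp b x with hbx' | h'
    · by_contra hc
      exact hbx ⟨hbx', hc⟩
    · exact h'
  exact ha.2 (hG x b y a hxb hb hya)
end

section
/- Let X be a locally compact separable completely metrizable space, λ a Borel probability measure on X×X, and P a set of complete continuous preferences such that for each ⪰ ∈ P the indifference set {(x,y) : x ∼ y} has λ-measure zero. Let q: X×X → [0,1] be measurable and bounded. Then the map ⪰ ↦ ∫ 1_{(x,y)∈⪰}·q(x,y) dλ(x,y) is continuous on P with respect to the closed convergence topology. -/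
open Filter Topology MeasureTheory

theorem stmt17 {X : Type*} [TopologicalSpace X] [PolishSpace X] [LocallyCompactSpace X]
    [MeasurableSpace (X × X)] [BorelSpace (X × X)]
    (lam : Measure (X × X)) [IsProbabilityMeasure lam]
    (P : Set (Set (X × X)))
    (hP : ∀ R ∈ P, CompleteRel R ∧ IsClosed R ∧
      lam {p : X × X | p ∈ R ∧ Prod.swap p ∈ R} = 0)
    (q : X × X → ℝ) (hqm : Measurable q) (hq01 : ∀ p, 0 ≤ q p ∧ q p ≤ 1)
    (R : ℕ → Set (X × X)) (hRn : ∀ n, R n ∈ P)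
    (S : Set (X × X)) (hS : S ∈ P)
    (hconv : ClosedConv R S) :
    Tendsto (fun n => ∫ p, Set.indicator (R n) q p ∂lam) atTop
      (𝓝 (∫ p, Set.indicator S q p ∂lam)) := by
  have hmeas : ∀ T ∈ P, MeasurableSet T := fun T hT => (hP T hT).2.1.measurableSet
  apply tendsto_integral_of_dominated_convergence (fun _ => (1 : ℝ))
  · intro n
    exact (hqm.indicator (hmeas _ (hRn n))).aestronglyMeasurable
  · exact integrable_const 1
  · intro n
    filter_upwards with p
    rw [Real.norm_eq_abs, abs_of_nonneg (Set.indicator_nonneg (fun p _ => (hq01 p).1) p)]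
    exact Set.indicator_le' (fun p _ => (hq01 p).2) (fun _ _ => zero_le_one) p
  · have hnull : ∀ᵐ p ∂lam, ¬(p ∈ S ∧ Prod.swap p ∈ S) := by
      rw [ae_iff]
      simpa using (hP S hS).2.2
    filter_upwards [hnull] with p hp
    by_cases hpS : p ∈ S
    · -- swap p ∉ S; show eventually p ∈ R n
      have hswap : Prod.swap p ∉ S := fun h => hp ⟨hpS, h⟩
      have hev : ∀ᶠ n in atTop, p ∈ R n := by
        by_contra hcon
        have hfreq : ∃ᶠ n in atTop, p ∉ R n := by
          rwa [Filter.not_eventually] at hcon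
        obtain ⟨φ, hφ, hφp⟩ := Filter.extraction_of_frequently_atTop hfreq
        have hin : ∀ k, (fun _ : ℕ => Prod.swap p) k ∈ R (φ k) := by
          intro k
          rcases (hP _ (hRn (φ k))).1 p.1 p.2 with h | h
          · exact absurd h (hφp k)
          · exact h
        exact hswap (hconv.2 φ hφ _ hin (Prod.swap p) tendsto_const_nhds)
      have : (fun n => Set.indicator (R n) q p) =ᶠ[atTop] fun _ => q p := by
        filter_upwards [hev] with n hn
        exact Set.indicator_of_mem hn q
      rw [Set.indicator_of_mem hpS q]
      exact Tendsto.congr' this.symm tendsto_const_nhds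
    · -- p ∉ S; show eventually p ∉ R n
      have hev : ∀ᶠ n in atTop, p ∉ R n := by
        by_contra hcon
        have hfreq : ∃ᶠ n in atTop, p ∈ R n := by
          simpa using (Filter.not_eventually.mp hcon)
        obtain ⟨φ, hφ, hφp⟩ := Filter.extraction_of_frequently_atTop hfreq
        exact hpS (hconv.2 φ hφ (fun _ => p) hφp p tendsto_const_nhds)
      have : (fun n => Set.indicator (R n) q p) =ᶠ[atTop] fun _ => (0 : ℝ) := by
        filter_upwards [hev] with n hn
        exact Set.indicator_of_notMem hn q
      rw [Set.indicator_of_notMem hpS q]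
      exact Tendsto.congr' this.symm tendsto_const_nhds
end
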